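/- arXiv:2507.23216 — 7 statements merged into one kernel-verified Lean document; each statement's English description precedes it below -/
import Mathlib

section
/- Define a recursive function dea : ℕ → ℕ → ℤ → Option ℤ by: dea a 0 c = none; if b ≠ 0 and b ∣ (c - a) then dea a b c = some ((c - a)/b); otherwise dea a b c = Option.map (fun y => (c - y·a)/b) (dea b (a % b) c). Then whenever dea a b c = some y, there exists an integer x with a·x + b·y = c. -/
def dea (a b : ℕ) (c : ℤ) : Option ℤ :=
  if h : b = 0 then none
  else if (b : ℤ) ∣ (c - a) then some ((c - (a : ℤ)) / b)
  else Option.map (fun y => (c - y * a) / b) (dea b (a % b) c)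
termination_by b
decreasing_by exact Nat.mod_lt a (Nat.pos_of_ne_zero h)

theorem stmt_4 (a b : ℕ) (c y : ℤ) (h : dea a b c = some y) :
    ∃ x : ℤ, (a : ℤ) * x + (b : ℤ) * y = c := by
  induction b using Nat.strong_induction_on generalizing a y with
  | _ b ih =>
    rw [dea] at h
    split_ifs at h with hb hd
    · -- b ∣ c - a
      obtain rfl : (c - (a:ℤ)) / b = y := Option.some.inj h
      refine ⟨1, ?_⟩
      rw [Int.mul_ediv_cancel' hd]
      ring
    · -- recursive case
      simp only [Option.map_eq_some_iff] at h
      obtain ⟨y', hy', rfl⟩ := h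
      obtain ⟨x', hx'⟩ := ih (a % b) (Nat.mod_lt a (Nat.pos_of_ne_zero hb)) b y' hy'
      have hbz : (b:ℤ) ≠ 0 := by exact_mod_cast hb
      have ha : (a:ℤ) = b * (a / b : ℕ) + (a % b : ℕ) := by
        exact_mod_cast (Nat.div_add_mod a b).symm
      have hdiv : (b:ℤ) ∣ (c - y' * a) := by
        refine ⟨x' - y' * (a / b : ℕ), ?_⟩
        rw [ha]; linarith [hx']
      refine ⟨y', ?_⟩
      rw [Int.mul_ediv_cancel' hdiv, ha]
      linarith [hx']
end

section
/- With dea as defined (dea a 0 c = none; dea a b c = some ((c-a)/b) if b ∣ (c-a); else dea a b c = Option.map (fun y => (c - y·a)/b) (dea b (a % b) c)): if b ≠ 0 and dea a b c = none, then gcd(a, b) does not divide c. -/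
/-- Along the recursion `gcd a b = gcd b (a % b)` is invariant; the recursion can only fall through
to `b = 0` from a step with `b ∣ a`, and there `gcd a b = b` divides `c` and `a`, hence `c - a`,
so the divisibility test succeeds instead. -/
theorem isSome_dea_of_gcd_dvd {a b : ℕ} {c : ℤ} (hb : b ≠ 0) (hc : (Nat.gcd a b : ℤ) ∣ c) :
    (dea a b c).isSome := by
  fun_induction dea a b c with
  | case1 => contradiction
  | case2 => rfl
  | case3 a b _ hca ih =>
    rw [Option.isSome_map]
    by_cases hr : a % b = 0
    · have hba : b ∣ a := Nat.dvd_of_mod_eq_zero hr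
      rw [Nat.gcd_eq_right hba] at hc
      exact absurd (hc.sub (Int.natCast_dvd_natCast.mpr hba)) hca
    · exact ih hr (by rwa [Nat.gcd_comm, ← Nat.gcd_rec, Nat.gcd_comm])

theorem stmt_5 (a b : ℕ) (c : ℤ) (hb : b ≠ 0) (h : dea a b c = none) :
    ¬ ((Nat.gcd a b : ℤ) ∣ c) := fun hc => by
  simpa [h] using isSome_dea_of_gcd_dvd hb hc
end

section
/- With dea as defined: if b ≠ 0 and gcd(a, b) divides c, then dea a b c = some y for some integer y (i.e., the algorithm terminates with a solution and never returns none). -/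
theorem stmt_6 (a b : ℕ) (c : ℤ) (hb : b ≠ 0) (h : (Nat.gcd a b : ℤ) ∣ c) :
    ∃ y : ℤ, dea a b c = some y := by
  induction b using Nat.strong_induction_on generalizing a with
  | _ b ih =>
    rw [dea]
    simp only [hb, dite_false]
    by_cases hd : (b : ℤ) ∣ (c - a)
    · exact ⟨(c - (a:ℤ))/b, by simp [hd]⟩
    · have hab : a % b ≠ 0 := by
        intro h0
        have hba : (b : ℤ) ∣ (a : ℤ) := by
          exact_mod_cast Nat.dvd_of_mod_eq_zero h0
        have hbc : (b : ℤ) ∣ c := by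
          have : Nat.gcd a b = b := Nat.gcd_eq_right (Nat.dvd_of_mod_eq_zero h0)
          rwa [this] at h
        exact hd (dvd_sub hbc hba)
      have hlt : a % b < b := Nat.mod_lt a (Nat.pos_of_ne_zero hb)
      have hg : (Nat.gcd b (a % b) : ℤ) ∣ c := by
        rw [Nat.gcd_comm b (a % b), ← Nat.gcd_rec b a, Nat.gcd_comm]; exact h
      obtain ⟨y, hy⟩ := ih (a % b) hlt b hab hg
      exact ⟨(c - y*(a:ℤ))/b, by simp [hd, hy]⟩
end

section
/- The DEA-R function and the DEA-OPTD function agree: for all a, b with b ≠ 0 and all c, if deaOpt a b c = some (x, y) then dea a b c = some y, and deaOpt a b c = none iff dea a b c = none. -/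
def deaOpt (a b : ℕ) (c : ℤ) : Option (ℤ × ℤ) :=
  if h : b = 0 then none
  else if (b : ℤ) ∣ (c - a) then some (1, (c - (a : ℤ)) / b)
  else Option.map (fun p => (p.2, p.1 - p.2 * ((a : ℤ) / b))) (deaOpt b (a % b) c)
termination_by b
decreasing_by exact Nat.mod_lt a (Nat.pos_of_ne_zero h)

/-! Every pair `(x, y)` returned by `deaOpt a b c` satisfies `x * a + y * b = c`. Given this invariant
for the recursive call on `(b, a % b)`, the division `(c - y * a) / b` performed by `dea` is exact and
equals `x - y * (a / b)`, the update of `deaOpt`; so `dea` is the second component of `deaOpt`. -/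

theorem deaOpt_bezout {a b : ℕ} {c x y : ℤ} (h : deaOpt a b c = some (x, y)) :
    x * a + y * b = c := by
  induction b using Nat.strong_induction_on generalizing a x y with
  | _ b ih =>
    rw [deaOpt] at h
    split_ifs at h with hb hd
    · obtain ⟨rfl, rfl⟩ := Prod.mk.inj (Option.some.inj h)
      rw [Int.ediv_mul_cancel hd]
      ring
    · obtain ⟨⟨x', y'⟩, hp, hxy⟩ := Option.map_eq_some_iff.mp h
      obtain ⟨rfl, rfl⟩ := Prod.mk.inj hxy
      have hrec := ih (a % b) (Nat.mod_lt a (Nat.pos_of_ne_zero hb)) hp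
      push_cast at hrec
      linear_combination hrec - y' * Int.mul_ediv_add_emod (a : ℤ) b

theorem map_snd_deaOpt (a b : ℕ) (c : ℤ) : (deaOpt a b c).map Prod.snd = dea a b c := by
  induction b using Nat.strong_induction_on generalizing a with
  | _ b ih =>
    rw [deaOpt, dea]
    split_ifs with hb hd
    · rfl
    · rfl
    · rw [← ih (a % b) (Nat.mod_lt a (Nat.pos_of_ne_zero hb)) b]
      rcases hp : deaOpt b (a % b) c with _ | ⟨x, y⟩
      · rfl
      · have hb' : (b : ℤ) ≠ 0 := Int.natCast_ne_zero.mpr hb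
        have hexact : c - y * a = (x - y * ((a : ℤ) / b)) * b := by
          have hrec := deaOpt_bezout hp
          push_cast at hrec
          linear_combination -hrec + y * Int.mul_ediv_add_emod (a : ℤ) b
        simp [hexact, Int.mul_ediv_cancel _ hb']

theorem stmt_8_general (a b : ℕ) (c : ℤ) :
    (∀ x y : ℤ, deaOpt a b c = some (x, y) → dea a b c = some y) ∧
    (deaOpt a b c = none ↔ dea a b c = none) := by
  rw [← map_snd_deaOpt]
  exact ⟨fun x y h => by rw [h]; rfl, Option.map_eq_none_iff.symm⟩

theorem stmt_8 (a b : ℕ) (c : ℤ) (hb : b ≠ 0) :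
    (∀ x y : ℤ, deaOpt a b c = some (x, y) → dea a b c = some y) ∧
    (deaOpt a b c = none ↔ dea a b c = none) :=
  stmt_8_general a b c
end

section
/- Let a > b > 0 be integers and c an integer. If there exists an integer Q with c = a + Q·b (i.e., b divides c - a), then the DEA-R recursion on input (a, b, c) terminates at the first call. More generally, if c ≡ a_i (mod a_{i+1}) where (a_i) is the remainder sequence of the Euclidean algorithm starting from (a_1, a_2) = (a, b), and i is minimal with this property, then the recursion depth of DEA-R on (a, b, c) is exactly i, which is at most the number of division steps of the Euclidean algorithm on (a, b). -/
/-- Remainder sequence of the Euclidean algorithm: `rem a b 0 = a₁ = a`,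
`rem a b 1 = a₂ = b`, `rem a b (n+2) = a_{n+1} mod a_{n+2}` (0-indexed shift of `a_i`). -/
def rem (a b : ℕ) : ℕ → ℕ
  | 0 => a
  | 1 => b
  | n + 2 => rem a b n % rem a b (n + 1)

/-- Number of recursive calls (recursion depth) of the DEA-R algorithm. -/
def deaDepth (a b : ℕ) (c : ℤ) : ℕ :=
  if h : b = 0 then 0
  else if (b : ℤ) ∣ (c - a) then 1
  else deaDepth b (a % b) c + 1
termination_by b
decreasing_by exact Nat.mod_lt a (Nat.pos_of_ne_zero h)

/-- Number of division steps of the Euclidean algorithm on `(a, b)`. -/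
def euclidSteps (a b : ℕ) : ℕ :=
  if h : b = 0 then 0
  else euclidSteps b (a % b) + 1
termination_by b
decreasing_by exact Nat.mod_lt a (Nat.pos_of_ne_zero h)

lemma rem_shift (a b : ℕ) : ∀ n, rem b (a % b) n = rem a b (n + 1)
  | 0 => rfl
  | 1 => rfl
  | n + 2 => by
      show rem b (a % b) n % rem b (a % b) (n + 1) = rem a b (n + 1) % rem a b (n + 2)
      rw [rem_shift a b n, rem_shift a b (n + 1)]

lemma rem_zero (a b : ℕ) (h : a % b = 0) :
    ∀ n, (rem a b (n + 1) = b ∧ rem a b (n + 2) = 0) ∨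
         (rem a b (n + 1) = 0 ∧ rem a b (n + 2) = b)
  | 0 => Or.inl ⟨rfl, h⟩
  | n + 1 => by
      rcases rem_zero a b h n with ⟨h1, h2⟩ | ⟨h1, h2⟩
      · refine Or.inr ⟨h2, ?_⟩
        show rem a b (n + 1) % rem a b (n + 2) = b
        rw [h1, h2, Nat.mod_zero]
      · refine Or.inl ⟨h2, ?_⟩
        show rem a b (n + 1) % rem a b (n + 2) = 0
        rw [h1, Nat.zero_mod]

lemma main_lemma : ∀ b a : ℕ, ∀ c : ℤ, ∀ i : ℕ, b ≠ 0 → 1 ≤ i →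
    rem a b i ≠ 0 →
    ((rem a b i : ℤ) ∣ (c - (rem a b (i - 1) : ℤ))) →
    (∀ j, 1 ≤ j → j < i → ¬ ((rem a b j : ℤ) ∣ (c - (rem a b (j - 1) : ℤ)))) →
    deaDepth a b c = i ∧ i ≤ euclidSteps a b := by
  intro b
  induction b using Nat.strong_induction_on with
  | _ b IH =>
    intro a c i hb0 hi hne hdvd hmin
    have heuclid : euclidSteps a b = euclidSteps b (a % b) + 1 := by
      rw [euclidSteps, dif_neg hb0]
    match i, hi with
    | 1, _ =>
      have hdvd' : (b : ℤ) ∣ (c - a) := hdvd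
      constructor
      · rw [deaDepth, dif_neg hb0, if_pos hdvd']
      · omega
    | k + 2, _ =>
      have hnd : ¬ ((b : ℤ) ∣ (c - a)) := hmin 1 le_rfl (by omega)
      by_cases hr : a % b = 0
      · -- degenerate case: contradiction
        rcases rem_zero a b hr k with ⟨h1, h2⟩ | ⟨h1, h2⟩
        · exact absurd h2 hne
        · exfalso
          apply hnd
          have hbc : (b : ℤ) ∣ c := by
            have := hdvd
            rw [show k + 2 - 1 = k + 1 from rfl, h1, h2] at this
            simpa using this
          have hba : (b : ℤ) ∣ (a : ℤ) := by
            exact_mod_cast Int.natCast_dvd_natCast.mpr (Nat.dvd_of_mod_eq_zero hr)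
          exact dvd_sub hbc hba
      · have hdd : deaDepth a b c = deaDepth b (a % b) c + 1 := by
          rw [deaDepth, dif_neg hb0, if_neg hnd]
        have hlt : a % b < b := Nat.mod_lt a (Nat.pos_of_ne_zero hb0)
        have h1 : rem b (a % b) (k + 1) ≠ 0 := by
          rw [rem_shift]; exact hne
        have h2 : ((rem b (a % b) (k + 1) : ℤ)) ∣ (c - (rem b (a % b) (k + 1 - 1) : ℤ)) := by
          rw [rem_shift, show k + 1 - 1 = k from rfl, rem_shift]
          exact hdvd
        have h3 : ∀ j, 1 ≤ j → j < k + 1 →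
            ¬ ((rem b (a % b) j : ℤ) ∣ (c - (rem b (a % b) (j - 1) : ℤ))) := by
          intro j hj hjk
          rw [rem_shift, rem_shift]
          have : j - 1 + 1 = j := by omega
          rw [this]
          have := hmin (j + 1) (by omega) (by omega)
          simpa using this
        obtain ⟨hd, he⟩ := IH (a % b) hlt b c (k + 1) hr (by omega) h1 h2 h3
        refine ⟨by omega, by omega⟩

theorem stmt_10 (a b : ℕ) (c : ℤ) (hab : b < a) (hb : 0 < b)
    (i : ℕ) (hi : 1 ≤ i)
    (hne : rem a b i ≠ 0)
    (hdvd : (rem a b i : ℤ) ∣ (c - (rem a b (i - 1) : ℤ)))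
    (hmin : ∀ j, 1 ≤ j → j < i → ¬ ((rem a b j : ℤ) ∣ (c - (rem a b (j - 1) : ℤ)))) :
    ((∃ Q : ℤ, c = a + Q * b) → deaDepth a b c = 1) ∧
    deaDepth a b c = i ∧ i ≤ euclidSteps a b := by
  have hb0 : b ≠ 0 := Nat.pos_iff_ne_zero.mp hb
  refine ⟨?_, main_lemma b a c i hb0 hi hne hdvd hmin⟩
  rintro ⟨Q, rfl⟩
  have hdvd' : (b : ℤ) ∣ ((a : ℤ) + Q * b - a) := ⟨Q, by ring⟩
  rw [deaDepth, dif_neg hb0, if_pos hdvd']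
end

section
/- Let a > b > 0 with remainder sequence a_1 = a, a_2 = b, a_{i+2} = a_i mod a_{i+1}. If c is an integer such that a_{i+1} divides c - a_i (i.e., c ∈ 𝐜_i), and x, y are obtained by applying the backward recurrence F_{i} = (c - a_i)/a_{i+1}, F_{i-1} = 1 - F_i·q_{i-1}, F_{j} = F_{j+2} - q_j·F_{j+1}, then (x, y) = (F_2, F_1) satisfies a·x + b·y = c, where F_{i+1} := 1. -/
theorem cross_sum_step {r q E : ℕ → ℤ} {k : ℕ} (hr : r (k + 2) = r k - q k * r (k + 1))
    (hE : E k = E (k + 2) - q k * E (k + 1)) :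
    r k * E (k + 1) + r (k + 1) * E k = r (k + 1) * E (k + 2) + r (k + 2) * E (k + 1) := by
  rw [hr, hE]
  ring

theorem cross_sum_eq_of_recurrence {r q E : ℕ → ℤ} {n : ℕ}
    (hr : ∀ k < n, r (k + 2) = r k - q k * r (k + 1))
    (hE : ∀ k < n, E k = E (k + 2) - q k * E (k + 1)) :
    r 0 * E 1 + r 1 * E 0 = r n * E (n + 1) + r (n + 1) * E n := by
  induction n with
  | zero => rfl
  | succ n ih =>
    rw [ih (fun k hk => hr k (by omega)) (fun k hk => hE k (by omega)),
      cross_sum_step (hr n n.lt_succ_self) (hE n n.lt_succ_self)]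

theorem rem_add_two_eq_sub (a b n : ℕ) :
    (rem a b (n + 2) : ℤ) = rem a b n - (rem a b n : ℤ) / rem a b (n + 1) * rem a b (n + 1) := by
  change ((rem a b n % rem a b (n + 1) : ℕ) : ℤ) = _
  push_cast
  rw [Int.emod_def]
  ring

theorem stmt_12_general (a b : ℕ) (c : ℤ)
    (i : ℕ) (hi : 2 ≤ i)
    (hdvd : (rem a b i : ℤ) ∣ (c - (rem a b (i - 1) : ℤ)))
    (F : ℕ → ℤ)
    (hFi1 : F (i + 1) = 1)
    (hFi : F i = (c - (rem a b (i - 1) : ℤ)) / (rem a b i : ℤ))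
    (hFim1 : F (i - 1) = 1 - F i * ((rem a b (i - 2) : ℤ) / (rem a b (i - 1) : ℤ)))
    (hF : ∀ j, 1 ≤ j → j < i - 1 →
      F j = F (j + 2) - ((rem a b (j - 1) : ℤ) / (rem a b j : ℤ)) * F (j + 1)) :
    (a : ℤ) * F 2 + (b : ℤ) * F 1 = c := by
  obtain ⟨m, rfl⟩ : ∃ m, i = m + 2 := ⟨i - 2, by omega⟩
  simp only [show m + 2 - 1 = m + 1 from rfl, Nat.add_sub_cancel] at hdvd hFi hFim1 hF
  have hE : ∀ k < m + 1, F (k + 1) =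
      F (k + 3) - (rem a b k : ℤ) / rem a b (k + 1) * F (k + 2) := by
    intro k hk
    rcases Nat.lt_succ_iff_lt_or_eq.mp hk with hlt | rfl
    · simpa using hF (k + 1) (by omega) (by omega)
    · rw [hFim1, hFi1]
      ring
  have hcross := cross_sum_eq_of_recurrence (n := m + 1) (r := fun k => (rem a b k : ℤ))
    (E := fun k => F (k + 1)) (fun k _ => rem_add_two_eq_sub a b k) hE
  have htop : (rem a b (m + 2) : ℤ) * F (m + 2) = c - rem a b (m + 1) := by
    rw [hFi]
    exact Int.mul_ediv_cancel' hdvd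
  change (a : ℤ) * F 2 + b * F 1 = rem a b (m + 1) * F (m + 3) + rem a b (m + 2) * F (m + 2)
    at hcross
  rw [hcross, hFi1, htop]
  ring

theorem stmt_12 (a b : ℕ) (c : ℤ) (hab : b < a) (hb : 0 < b)
    (i : ℕ) (hi : 2 ≤ i)
    (hne : rem a b i ≠ 0)
    (hdvd : (rem a b i : ℤ) ∣ (c - (rem a b (i - 1) : ℤ)))
    (F : ℕ → ℤ)
    (hFi1 : F (i + 1) = 1)
    (hFi : F i = (c - (rem a b (i - 1) : ℤ)) / (rem a b i : ℤ))
    (hFim1 : F (i - 1) = 1 - F i * ((rem a b (i - 2) : ℤ) / (rem a b (i - 1) : ℤ)))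
    (hF : ∀ j, 1 ≤ j → j < i - 1 →
      F j = F (j + 2) - ((rem a b (j - 1) : ℤ) / (rem a b j : ℤ)) * F (j + 1)) :
    (a : ℤ) * F 2 + (b : ℤ) * F 1 = c :=
  stmt_12_general a b c i hi hdvd F hFi1 hFi hFim1 hF
end

section
/- The iterative algorithm DEA-OPTDI computes the same output as the recursive DEA-OPTD: for inputs a > b > 0 and c with gcd(a,b) ∣ c, the loop that records quotients ⌊a_j/a_{j+1}⌋ in an array until a_{i+1} ∣ (c - a_i), followed by the backward loop f₁ ← 1, f₂ ← (c - a_i)/a_{i+1}, then repeatedly (f₁, f₂) ← (f₂, f₁ - f₂·floorarray[last]), returns a pair (f₁, f₂) with a·f₁ + b·f₂ = c. -/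
/-- Forward loop of DEA-OPTDI: record the Euclidean quotients `⌊a_j/a_{j+1}⌋` in
order until the first pair `(a_i, a_{i+1})` with `a_{i+1} ∣ (c - a_i)`; return the
quotient list together with that final pair.  Returns `none` when the second
argument becomes `0` before the divisibility test succeeds. -/
def quotsAndBase (a b : ℕ) (c : ℤ) : Option (List ℤ × ℕ × ℕ) :=
  if h : b = 0 then none
  else if (b : ℤ) ∣ (c - a) then some ([], a, b)
  else Option.map (fun p => (((a / b : ℕ) : ℤ) :: p.1, p.2)) (quotsAndBase b (a % b) c)
termination_by b
decreasing_by exact Nat.mod_lt a (Nat.pos_of_ne_zero h)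

/-- One step of the backward loop of DEA-OPTDI: `(f₁, f₂) ← (f₂, f₁ - f₂·q)`. -/
def backstep (q : ℤ) (p : ℤ × ℤ) : ℤ × ℤ := (p.2, p.1 - p.2 * q)

theorem stmt_16 (a b : ℕ) (c : ℤ) (hab : b < a) (hb : 0 < b)
    (hdvd : (Nat.gcd a b : ℤ) ∣ c) :
    ∃ (l : List ℤ) (p q : ℕ),
      quotsAndBase a b c = some (l, p, q) ∧
      (let f := List.foldr backstep (1, (c - (p : ℤ)) / (q : ℤ)) l
       (a : ℤ) * f.1 + (b : ℤ) * f.2 = c) := by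
  induction b using Nat.strong_induction_on generalizing a with
  | _ b ih =>
    rw [quotsAndBase, dif_neg hb.ne']
    by_cases hd : (b : ℤ) ∣ (c - a)
    · rw [if_pos hd]
      refine ⟨[], a, b, rfl, ?_⟩
      have := Int.mul_ediv_cancel' hd
      simp only [List.foldr]
      linarith
    · rw [if_neg hd]
      have hmod : 0 < a % b := by
        rcases Nat.eq_zero_or_pos (a % b) with h0 | h
        · exfalso
          have hba : b ∣ a := Nat.dvd_of_mod_eq_zero h0
          have hg : Nat.gcd a b = b := Nat.gcd_eq_right hba
          rw [hg] at hdvd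
          exact hd (dvd_sub hdvd (Int.natCast_dvd_natCast.mpr hba))
        · exact h
      have hg : Nat.gcd b (a % b) = Nat.gcd a b := by
        rw [Nat.gcd_comm b (a % b), ← Nat.gcd_rec, Nat.gcd_comm]
      obtain ⟨l, p, q, heq, hf⟩ :=
        ih (a % b) (Nat.mod_lt a hb) b (Nat.mod_lt a hb) hmod (by rw [hg]; exact hdvd)
      refine ⟨((a / b : ℕ) : ℤ) :: l, p, q, by rw [heq]; rfl, ?_⟩
      simp only [List.foldr, backstep] at hf ⊢
      set f := List.foldr backstep (1, (c - (p : ℤ)) / (q : ℤ)) l with hfdef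
      have key : (b : ℤ) * ((a / b : ℕ) : ℤ) + ((a % b : ℕ) : ℤ) = a := by
        exact_mod_cast Nat.div_add_mod a b
      linear_combination hf - f.2 * key
end
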